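/- arXiv:math/0011226 — 5 statements merged into one kernel-verified Lean document; each statement's English description precedes it below -/
import Mathlib

section
/- Let K be a nonempty perfect closed subset of an open interval I ⊆ ℝ such that every point of K is an endpoint of some connected component of I \ K. Then K is countable, totally disconnected, and perfect — contradicting the fact that every nonempty perfect compact subset of ℝ is uncountable. Hence no such K exists. -/
/-!
Each connected component of the open set `I \ K` is an open interval, so it contains a rational
and has at most two endpoints; hence the set of endpoints of components is countable, and so is
`K`. Its closure adds at most the two endpoints of `I`, and is a nonempty perfect subset of `ℝ`,
which carries a copy of the Cantor space and so cannot be countable.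
-/

open Set

theorem not_countable_nat_bool : ¬ Countable (ℕ → Bool) := by
  rw [← Cardinal.mk_le_aleph0_iff]
  simpa using Cardinal.aleph0_lt_continuum

theorem Perfect.not_countable {α : Type*} [MetricSpace α] [CompleteSpace α] {C : Set α}
    (hC : Perfect C) (hne : C.Nonempty) : ¬ C.Countable := by
  intro hCc
  obtain ⟨f, hfC, -, hf⟩ := hC.exists_nat_bool_injection hne
  have hf_maps : MapsTo f univ C := mapsTo_univ_iff.2 fun x => hfC (mem_range_self x)
  exact not_countable_nat_bool (countable_univ_iff.1 (hf_maps.countable_of_injOn hf.injOn hCc))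

section ConditionallyCompleteLinearOrder

variable {α : Type*} [ConditionallyCompleteLinearOrder α] [TopologicalSpace α] [OrderTopology α]

theorem IsConnected.frontier_subset_csInf_csSup {s : Set α} (hs : IsConnected s)
    (hb : BddBelow s) (ha : BddAbove s) : frontier s ⊆ {sInf s, sSup s} :=
  calc frontier s = closure s \ interior s := rfl
    _ ⊆ Icc (sInf s) (sSup s) \ Ioo (sInf s) (sSup s) :=
      sdiff_subset_sdiff (closure_minimal (subset_Icc_csInf_csSup hb ha) isClosed_Icc)
        (interior_maximal (hs.Ioo_csInf_csSup_subset hb ha) isOpen_Ioo)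
    _ = {sInf s, sSup s} := Icc_sdiff_Ioo_same (csInf_le_csSup hs.nonempty hb ha)

theorem IsOpen.countable_setOf_mem_frontier_connectedComponentIn [LocallyConnectedSpace α]
    [TopologicalSpace.SeparableSpace α] {U : Set α} (hU : IsOpen U) (hb : BddBelow U)
    (ha : BddAbove U) :
    {x | ∃ y ∈ U, x ∈ frontier (connectedComponentIn U y)}.Countable := by
  obtain ⟨D, hDc, hDd⟩ := TopologicalSpace.exists_countable_dense α
  have hsub : {x | ∃ y ∈ U, x ∈ frontier (connectedComponentIn U y)} ⊆
      ⋃ d ∈ D ∩ U, frontier (connectedComponentIn U d) := by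
    rintro x ⟨y, hyU, hx⟩
    obtain ⟨d, hdD, hdy⟩ := hDd.exists_mem_open hU.connectedComponentIn
      (isConnected_connectedComponentIn_iff.2 hyU).nonempty
    refine mem_biUnion ⟨hdD, connectedComponentIn_subset U y hdy⟩ ?_
    rwa [← connectedComponentIn_eq hdy]
  refine ((hDc.mono inter_subset_left).biUnion fun d hd => ?_).mono hsub
  have hC_sub : connectedComponentIn U d ⊆ U := connectedComponentIn_subset U d
  exact ((countable_singleton _).insert _).mono
    ((isConnected_connectedComponentIn_iff.2 hd.2).frontier_subset_csInf_csSup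
      (hb.mono hC_sub) (ha.mono hC_sub))

end ConditionallyCompleteLinearOrder

theorem stmt_1_general (a b : ℝ) (K : Set ℝ)
    (hKI : K ⊆ Ioo a b) (hne : K.Nonempty)
    (hclosed : closure K ∩ Ioo a b ⊆ K)
    (hperfect : ∀ x ∈ K, x ∈ closure (K \ {x}))
    (hend : ∀ x ∈ K, ∃ y ∈ Ioo a b \ K,
      x ∈ frontier (connectedComponentIn (Ioo a b \ K) y)) :
    False := by
  have hU_eq : Ioo a b \ K = Ioo a b \ closure K :=
    Subset.antisymm (fun z hz => ⟨hz.1, fun hzK => hz.2 (hclosed ⟨hzK, hz.1⟩)⟩)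
      (sdiff_subset_sdiff_right subset_closure)
  have hU_open : IsOpen (Ioo a b \ K) := hU_eq ▸ isOpen_Ioo.sdiff isClosed_closure
  have hK_countable : K.Countable :=
    (hU_open.countable_setOf_mem_frontier_connectedComponentIn
      (bddBelow_Ioo.mono sdiff_subset) (bddAbove_Ioo.mono sdiff_subset)).mono hend
  have hclosure_sub : closure K ⊆ insert a (insert b K) := fun z hz => by
    have hz_Icc : z ∈ Icc a b := closure_minimal (hKI.trans Ioo_subset_Icc_self) isClosed_Icc hz
    by_cases hzI : z ∈ Ioo a b
    · exact Or.inr (Or.inr (hclosed ⟨hz, hzI⟩))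
    · grind
  have hperf : Perfect (closure K) := Preperfect.perfect_closure fun x hx =>
    accPt_principal_iff_clusterPt.2 (mem_closure_iff_clusterPt.1 (hperfect x hx))
  exact hperf.not_countable (hne.mono subset_closure)
    (((hK_countable.insert b).insert a).mono hclosure_sub)

/-- There is no nonempty perfect set `K`, closed in an open interval
`I = Ioo a b`, such that every point of `K` is a boundary point (endpoint) of some
connected component of `I \ K`.  (Such a `K` would be a countable perfect compact
set, contradicting that nonempty perfect complete sets are uncountable.) -/
theorem stmt_1 (a b : ℝ) (K : Set ℝ) (hab : a < b)
    (hKI : K ⊆ Ioo a b) (hne : K.Nonempty)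
    (hclosed : closure K ∩ Ioo a b ⊆ K)
    (hperfect : ∀ x ∈ K, x ∈ closure (K \ {x}))
    (hend : ∀ x ∈ K, ∃ y ∈ Ioo a b \ K,
      x ∈ frontier (connectedComponentIn (Ioo a b \ K) y)) :
    False :=
  stmt_1_general a b K hKI hne hclosed hperfect hend
end

section
/- Let Λ : ℂᵏ → ℂᵏ be a triangular dilating map, i.e., Λ(z) = (λ₁z₁, λ₂z₂ + P₂(z₁), …, λₖzₖ + Pₖ(z₁,…,z_{k−1})) with 1 < |λ₁| ≤ … ≤ |λₖ| and each Pᵢ a polynomial satisfying Pᵢ(λ₁z₁,…,λ_{i−1}z_{i−1}) = λᵢPᵢ(z₁,…,z_{i−1}). Then Λ is invertible, and for every z ∈ ℂᵏ, Λ^{−m}(z) → 0 as m → ∞. -/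
/-!
Since `Λ` is lower triangular with invertible diagonal, it is inverted coordinate by
coordinate: `Λ⁻¹(z)ᵢ = λᵢ⁻¹ (zᵢ - Pᵢ(Λ⁻¹(z)₁, …, Λ⁻¹(z)ᵢ₋₁))`. Taking `z = 0` in the
homogeneity relation gives `Pᵢ(0) = λᵢ Pᵢ(0)`, so `Pᵢ(0) = 0`. By induction on `i`, the first
`i - 1` coordinates of the backward orbit tend to `0`, hence so does the `Pᵢ`-term by continuity,
and the `i`-th coordinate `w` obeys `|w_{m+1}| ≤ |λᵢ|⁻¹ (|w_m| + o(1))` with `|λᵢ|⁻¹ < 1`.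
-/

open Filter Topology

theorem tendsto_zero_of_le_mul_add {c : ℝ} (hc0 : 0 ≤ c) (hc1 : c < 1) {a e : ℕ → ℝ}
    (ha : ∀ m, 0 ≤ a m) (hrec : ∀ m, a (m + 1) ≤ c * a m + e m)
    (he : Tendsto e atTop (𝓝 0)) : Tendsto a atTop (𝓝 0) := by
  refine tendsto_order.2 ⟨fun u hu => .of_forall fun m => hu.trans_le (ha m), fun u hu => ?_⟩
  set δ := u / 2
  obtain ⟨N, hN⟩ := eventually_atTop.1 <| (tendsto_order.1 he).2 ((1 - c) * δ) (by positivity)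
  -- Above `N`, the excess `a m - δ` over the level `δ` contracts by the factor `c`.
  have hgeom : ∀ j, a (j + N) - δ ≤ c ^ j * (a N - δ) := by
    intro j
    induction j with
    | zero => simp
    | succ j ih =>
      calc a (j + 1 + N) - δ ≤ c * (a (j + N) - δ) := by
            rw [Nat.add_right_comm]
            linarith [hrec (j + N), hN (j + N) (Nat.le_add_left _ _)]
        _ ≤ c ^ (j + 1) * (a N - δ) := by rw [pow_succ', mul_assoc]; gcongr
  have hlim : Tendsto (fun j => δ + c ^ j * (a N - δ)) atTop (𝓝 δ) := by
    simpa using (tendsto_pow_atTop_nhds_zero_of_lt_one hc0 hc1).mul_const (a N - δ)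
      |>.const_add δ
  have hδu : δ < u := half_lt_self hu
  rw [← map_add_atTop_eq_nat N, eventually_map]
  filter_upwards [(tendsto_order.1 hlim).2 u hδu] with j hj
  linarith [hgeom j]

theorem tendsto_zero_of_eq_mul_sub {K : Type*} [SeminormedRing K] {μ : K} (hμ : ‖μ‖ < 1)
    {w ε : ℕ → K} (hw : ∀ m, w (m + 1) = μ * (w m - ε m)) (hε : Tendsto ε atTop (𝓝 0)) :
    Tendsto w atTop (𝓝 0) := by
  refine tendsto_zero_iff_norm_tendsto_zero.2 <|
    tendsto_zero_of_le_mul_add (norm_nonneg μ) hμ (fun m => norm_nonneg _) (fun m => ?_)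
      (by simpa using hε.norm.const_mul ‖μ‖)
  calc ‖w (m + 1)‖ ≤ ‖μ‖ * ‖w m - ε m‖ := hw m ▸ norm_mul_le _ _
    _ ≤ ‖μ‖ * (‖w m‖ + ‖ε m‖) := by gcongr; exact norm_sub_le _ _
    _ = ‖μ‖ * ‖w m‖ + ‖μ‖ * ‖ε m‖ := mul_add _ _ _

section Triangular

variable {K : Type*} {k : ℕ}

section Field

variable [Field K] (lam : Fin k → K) (P : ∀ i : Fin k, MvPolynomial (Fin i.val) K)

noncomputable def triangularMap (z : Fin k → K) (i : Fin k) : K :=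
  lam i * z i + MvPolynomial.eval (fun j : Fin i.val => z (Fin.castLE i.isLt.le j)) (P i)

noncomputable def triangularInv (z : Fin k → K) (i : Fin k) : K :=
  (lam i)⁻¹ *
    (z i - MvPolynomial.eval (fun j : Fin i.val => triangularInv z (Fin.castLE i.isLt.le j)) (P i))
termination_by i.val
decreasing_by exact j.isLt

theorem triangularInv_apply (z : Fin k → K) (i : Fin k) :
    triangularInv lam P z i = (lam i)⁻¹ * (z i -
      MvPolynomial.eval (fun j : Fin i.val => triangularInv lam P z (Fin.castLE i.isLt.le j))
        (P i)) := by
  rw [triangularInv]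

variable {lam}

theorem triangularMap_triangularInv (hlam : ∀ i, lam i ≠ 0) (z : Fin k → K) :
    triangularMap lam P (triangularInv lam P z) = z := by
  funext i
  rw [triangularMap, triangularInv_apply, mul_inv_cancel_left₀ (hlam i), sub_add_cancel]

theorem triangularInv_triangularMap (hlam : ∀ i, lam i ≠ 0) (z : Fin k → K) :
    triangularInv lam P (triangularMap lam P z) = z := by
  funext i
  induction i using WellFoundedLT.induction with
  | _ i ih =>
    have hprev : (fun j : Fin i.val =>
        triangularInv lam P (triangularMap lam P z) (Fin.castLE i.isLt.le j)) =
        fun j => z (Fin.castLE i.isLt.le j) := funext fun j => ih _ j.isLt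
    rw [triangularInv_apply, hprev, triangularMap, add_sub_cancel_right,
      inv_mul_cancel_left₀ (hlam i)]

end Field

theorem tendsto_iterate_triangularInv [NormedField K] {lam : Fin k → K}
    (P : ∀ i : Fin k, MvPolynomial (Fin i.val) K) (hlam : ∀ i, 1 < ‖lam i‖)
    (hP : ∀ i, MvPolynomial.eval 0 (P i) = 0) (z : Fin k → K) :
    Tendsto (fun m => (triangularInv lam P)^[m] z) atTop (𝓝 0) := by
  rw [tendsto_pi_nhds]
  intro i
  induction i using WellFoundedLT.induction with
  | _ i ih =>
    have hprev : Tendsto (fun m (j : Fin i.val) =>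
        (triangularInv lam P)^[m + 1] z (Fin.castLE i.isLt.le j)) atTop (𝓝 0) :=
      tendsto_pi_nhds.2 fun j => (ih _ j.isLt).comp (tendsto_add_atTop_nat 1)
    refine tendsto_zero_of_eq_mul_sub (μ := (lam i)⁻¹)
      (by simpa using inv_lt_one_of_one_lt₀ (hlam i)) (fun m => ?_)
      ((MvPolynomial.continuous_eval (P i)).tendsto' 0 0 (hP i) |>.comp hprev)
    simp only [Function.comp_apply, Function.iterate_succ_apply']
    exact triangularInv_apply lam P _ i

end Triangular

theorem stmt_3_general (k : ℕ) (lam : Fin k → ℂ)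
    (P : ∀ i : Fin k, MvPolynomial (Fin i.val) ℂ)
    (hlam1 : ∀ i, 1 < ‖lam i‖)
    (hhom : ∀ i : Fin k, ∀ z : Fin k → ℂ,
      MvPolynomial.eval
          (fun j : Fin i.val => lam (Fin.castLE i.isLt.le j) * z (Fin.castLE i.isLt.le j))
          (P i)
        = lam i * MvPolynomial.eval (fun j : Fin i.val => z (Fin.castLE i.isLt.le j)) (P i))
    (Λ : (Fin k → ℂ) → (Fin k → ℂ))
    (hΛ : ∀ z i, Λ z i = lam i * z i
        + MvPolynomial.eval (fun j : Fin i.val => z (Fin.castLE i.isLt.le j)) (P i)) :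
    Function.Bijective Λ ∧ ∃ Λinv : (Fin k → ℂ) → (Fin k → ℂ),
      (∀ z, Λ (Λinv z) = z) ∧ (∀ z, Λinv (Λ z) = z) ∧
      ∀ z, Tendsto (fun m => Λinv^[m] z) atTop (nhds (0 : Fin k → ℂ)) := by
  obtain rfl : Λ = triangularMap lam P := funext fun z => funext (hΛ z)
  have hlam0 : ∀ i, lam i ≠ 0 := fun i => norm_pos_iff.1 (one_pos.trans (hlam1 i))
  have hP0 : ∀ i, MvPolynomial.eval 0 (P i) = 0 := fun i => by
    have h := hhom i 0
    simp only [Pi.zero_apply, mul_zero] at h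
    exact (mul_left_eq_self₀.1 h.symm).resolve_left fun h1 => by simpa [h1] using hlam1 i
  have hleft := triangularInv_triangularMap P hlam0
  have hright := triangularMap_triangularInv P hlam0
  exact ⟨Function.bijective_iff_has_inverse.2 ⟨_, hleft, hright⟩, _, hright, hleft,
    tendsto_iterate_triangularInv P hlam1 hP0⟩

/-- A triangular dilating map
`Λ(z) = (λ₁z₁, λ₂z₂ + P₂(z₁), …, λₖzₖ + Pₖ(z₁,…,z_{k−1}))`
with `1 < |λ₁| ≤ … ≤ |λₖ|` and `Pᵢ(λ₁z₁,…,λ_{i−1}z_{i−1}) = λᵢPᵢ(z₁,…,z_{i−1})`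
is invertible, and the backward iterates `Λ^{−m}(z)` tend to `0` for every `z`. -/
theorem stmt_3 (k : ℕ) (lam : Fin k → ℂ)
    (P : ∀ i : Fin k, MvPolynomial (Fin i.val) ℂ)
    (hlam1 : ∀ i, 1 < ‖lam i‖)
    (hmono : ∀ i j : Fin k, i ≤ j → ‖lam i‖ ≤ ‖lam j‖)
    (hhom : ∀ i : Fin k, ∀ z : Fin k → ℂ,
      MvPolynomial.eval
          (fun j : Fin i.val => lam (Fin.castLE i.isLt.le j) * z (Fin.castLE i.isLt.le j))
          (P i)
        = lam i * MvPolynomial.eval (fun j : Fin i.val => z (Fin.castLE i.isLt.le j)) (P i))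
    (Λ : (Fin k → ℂ) → (Fin k → ℂ))
    (hΛ : ∀ z i, Λ z i = lam i * z i
        + MvPolynomial.eval (fun j : Fin i.val => z (Fin.castLE i.isLt.le j)) (P i)) :
    Function.Bijective Λ ∧ ∃ Λinv : (Fin k → ℂ) → (Fin k → ℂ),
      (∀ z, Λ (Λinv z) = z) ∧ (∀ z, Λinv (Λ z) = z) ∧
      ∀ z, Tendsto (fun m => Λinv^[m] z) atTop (nhds (0 : Fin k → ℂ)) :=
  stmt_3_general k lam P hlam1 hhom Λ hΛ
end

section
/- Let h be a real-valued function of class C^{2+ε} (0 < ε < 1) on a neighborhood of 0 in ℂ^{k−1} × ℝ, written h(z', t), and let r(z', t) := h(z', t) − P(z') where P is a real homogeneous polynomial of degree 2, with r(z', t) = O(‖(z', t)‖^{2+ε}). Suppose there is a map Ψ : ℂ^{k−1} × ℝ → ℂ^{k−1} × ℝ with λ·r(z', t) = r(Ψ(z', t)) for λ > 1, and Ψ^{−s}(z', t) = O(λ^{−s/2}·log s) as s → ∞. Then r ≡ 0. -/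
/-!
Iterating the functional equation backwards gives `r x = λ^s · r(Ψ^{-s} x)` for every `s`.
Since `Ψ^{-s} x = O(λ^{-s/2} log s)` tends to `0`, the bound `r = O(‖·‖^{2+ε})` applies
and yields `|r x| ≤ C λ^s (λ^{-s/2} log s)^{2+ε} = C λ^{-εs/2} (log s)^{2+ε}`, which tends to `0`.
-/

open Filter Real Topology

lemma tendsto_rpow_neg_mul_mul_log_rpow {lam q p : ℝ} (hlam : 1 < lam) (hq : 0 < q)
    (hp : 0 ≤ p) :
    Tendsto (fun s : ℕ => lam ^ (-(s : ℝ) * q) * log s ^ p) atTop (𝓝 0) := by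
  have hb : 0 < log lam * q := mul_pos (log_pos hlam) hq
  have hlim : Tendsto (fun x : ℝ => x ^ p * exp (-(log lam * q) * x)) atTop (𝓝 0) :=
    tendsto_rpow_mul_exp_neg_mul_atTop_nhds_zero p _ hb
  refine squeeze_zero' ?_ ?_ (hlim.comp tendsto_natCast_atTop_atTop)
  · filter_upwards [eventually_ge_atTop 1] with s hs
    have : 0 ≤ log s := log_nonneg (by exact_mod_cast hs)
    positivity
  · filter_upwards [eventually_ge_atTop 1] with s hs
    have hs1 : (1 : ℝ) ≤ s := by exact_mod_cast hs
    have hlog : log s ^ p ≤ (s : ℝ) ^ p :=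
      rpow_le_rpow (log_nonneg hs1) ((log_le_sub_one_of_pos (by linarith)).trans (by linarith)) hp
    rw [Function.comp_apply, rpow_def_of_pos (by linarith), mul_comm]
    exact mul_le_mul hlog (le_of_eq (by ring_nf)) (exp_pos _).le (by positivity)

lemma pow_mul_mul_rpow_neg_mul_mul_rpow {lam C L a p : ℝ} (hlam : 0 < lam) (hC : 0 ≤ C)
    (hL : 0 ≤ L) (s : ℕ) :
    lam ^ s * (C * lam ^ (-(s : ℝ) * a) * L) ^ p =
      C ^ p * (lam ^ (-(s : ℝ) * (a * p - 1)) * L ^ p) := by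
  rw [mul_rpow (by positivity) hL, mul_rpow hC (by positivity), ← rpow_mul hlam.le,
    ← rpow_natCast, show -(s : ℝ) * (a * p - 1) = s + -(s : ℝ) * a * p by ring, rpow_add hlam]
  ring

lemma tendsto_pow_mul_decay_rpow {lam C a p : ℝ} (hlam : 1 < lam) (hC : 0 ≤ C) (ha : 0 < a)
    (hap : 1 < a * p) :
    Tendsto (fun s : ℕ => lam ^ s * (C * lam ^ (-(s : ℝ) * a) * log s) ^ p) atTop (𝓝 0) := by
  have hp : 0 ≤ p := by nlinarith
  have hlim := (tendsto_rpow_neg_mul_mul_log_rpow hlam (sub_pos.2 hap) hp).const_mul (C ^ p)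
  rw [mul_zero] at hlim
  refine hlim.congr' ?_
  filter_upwards [eventually_ge_atTop 1] with s hs
  exact (pow_mul_mul_rpow_neg_mul_mul_rpow (by linarith) hC
    (log_nonneg (by exact_mod_cast hs)) s).symm

lemma eq_pow_mul_apply_iterate {α M : Type*} [Monoid M] {r : α → M} {lam : M}
    {Ψ Ψinv : α → α} (hΨ : Function.RightInverse Ψinv Ψ) (hfunc : ∀ x, lam * r x = r (Ψ x))
    (x : α) (s : ℕ) : r x = lam ^ s * r (Ψinv^[s] x) := by
  induction s with
  | zero => simp
  | succ s ih => rw [Function.iterate_succ_apply', pow_succ, mul_assoc, hfunc, hΨ, ← ih]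

lemma eq_zero_of_eq_pow_mul_of_decay {E : Type*} [SeminormedAddGroup E] {r : E → ℝ}
    {δ C C' lam a p : ℝ}
    (hδ : 0 < δ) (hC : 0 ≤ C) (hb : ∀ y, ‖y‖ ≤ δ → |r y| ≤ C * ‖y‖ ^ p)
    (hlam : 1 < lam) (ha : 0 < a) (hap : 1 < a * p) (hC' : 0 ≤ C') {x : E} (y : ℕ → E)
    (hy : ∀ s, r x = lam ^ s * r (y s))
    (hdecay : ∀ᶠ s in atTop, ‖y s‖ ≤ C' * lam ^ (-(s : ℝ) * a) * log s) :
    r x = 0 := by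
  have hp : 0 ≤ p := by nlinarith
  set F : ℕ → ℝ := fun s => C' * lam ^ (-(s : ℝ) * a) * log s
  have hF : Tendsto F atTop (𝓝 0) := by
    simpa [F, mul_assoc] using (tendsto_rpow_neg_mul_mul_log_rpow hlam ha zero_le_one).const_mul C'
  have hbound : ∀ᶠ s in atTop, |r x| ≤ C * (lam ^ s * F s ^ p) := by
    filter_upwards [hdecay, hF.eventually (ge_mem_nhds hδ)] with s hyF hFδ
    have hpow : 0 < lam ^ s := pow_pos (by linarith) s
    calc |r x| = lam ^ s * |r (y s)| := by rw [hy s, abs_mul, abs_of_pos hpow]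
      _ ≤ lam ^ s * (C * F s ^ p) := by
        gcongr
        exact (hb _ (hyF.trans hFδ)).trans (by gcongr)
      _ = C * (lam ^ s * F s ^ p) := by ring
  have hlim := (tendsto_pow_mul_decay_rpow hlam hC' ha hap).const_mul C
  rw [mul_zero] at hlim
  exact abs_nonpos_iff.mp (ge_of_tendsto hlim hbound)

theorem stmt_11_general (n : ℕ) (ε : ℝ) (hε0 : 0 < ε)
    (r : (EuclideanSpace ℂ (Fin n) × ℝ) → ℝ)
    (hbound : ∃ δ > (0:ℝ), ∃ C > (0:ℝ), ∀ x : EuclideanSpace ℂ (Fin n) × ℝ,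
      ‖x‖ ≤ δ → |r x| ≤ C * ‖x‖ ^ (2 + ε))
    (lam : ℝ) (hlam : 1 < lam)
    (Ψ Ψinv : (EuclideanSpace ℂ (Fin n) × ℝ) → (EuclideanSpace ℂ (Fin n) × ℝ))
    (hΨ : ∀ x, Ψ (Ψinv x) = x)
    (hfunc : ∀ x, lam * r x = r (Ψ x))
    (hdecay : ∀ x, ∃ C > (0:ℝ), ∀ s : ℕ, 2 ≤ s →
      ‖Ψinv^[s] x‖ ≤ C * lam ^ (-(s : ℝ) / 2) * Real.log s) :
    ∀ x, r x = 0 := by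
  obtain ⟨δ, hδ, C, hC, hb⟩ := hbound
  intro x
  obtain ⟨C', hC', hd⟩ := hdecay x
  refine eq_zero_of_eq_pow_mul_of_decay hδ hC.le hb hlam (a := 2⁻¹) (by norm_num) (by linarith)
    hC'.le _ (eq_pow_mul_apply_iterate hΨ hfunc x) ?_
  filter_upwards [eventually_ge_atTop 2] with s hs
  simpa only [div_eq_mul_inv] using hd s hs

/-- Rigidity: if `r = O(‖·‖^{2+ε})` near `0`, `λ·r = r ∘ Ψ` for some
`λ > 1`, and the backward iterates satisfy `Ψ^{−s}(x) = O(λ^{−s/2} log s)`, then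
`r ≡ 0`. -/
theorem stmt_11 (n : ℕ) (ε : ℝ) (hε0 : 0 < ε) (hε1 : ε < 1)
    (r : (EuclideanSpace ℂ (Fin n) × ℝ) → ℝ)
    (hbound : ∃ δ > (0:ℝ), ∃ C > (0:ℝ), ∀ x : EuclideanSpace ℂ (Fin n) × ℝ,
      ‖x‖ ≤ δ → |r x| ≤ C * ‖x‖ ^ (2 + ε))
    (lam : ℝ) (hlam : 1 < lam)
    (Ψ Ψinv : (EuclideanSpace ℂ (Fin n) × ℝ) → (EuclideanSpace ℂ (Fin n) × ℝ))
    (hΨ : ∀ x, Ψ (Ψinv x) = x)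
    (hfunc : ∀ x, lam * r x = r (Ψ x))
    (hdecay : ∀ x, ∃ C > (0:ℝ), ∀ s : ℕ, 2 ≤ s →
      ‖Ψinv^[s] x‖ ≤ C * lam ^ (-(s : ℝ) / 2) * Real.log s) :
    ∀ x, r x = 0 :=
  stmt_11_general n ε hε0 r hbound lam hlam Ψ Ψinv hΨ hfunc hdecay
end

section
/- Let ψ : ℂ → ℂᵏ be an injective polynomial map whose image closure in ℙᵏ meets the hyperplane at infinity transversally in a single point. Then ψ has degree 1, i.e., ψ(ζ) = ν₁ζ + ν₂ for some ν₁, ν₂ ∈ ℂᵏ with ν₁ ≠ 0, and the image is a complex affine line. -/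
open Polynomial Filter Bornology

lemma poly_tendsto_const (r : Polynomial ℂ) (c : ℂ)
    (h : Tendsto (fun ζ => r.eval ζ) (cobounded ℂ) (nhds c)) : r = C c := by
  have hdeg : ¬ 0 < r.degree := by
    intro hd
    have hnorm : Tendsto (fun ζ : ℂ => ‖r.eval ζ‖) (cobounded ℂ) atTop :=
      r.tendsto_norm_atTop hd tendsto_norm_cobounded_atTop
    have hb : Tendsto (fun ζ : ℂ => ‖r.eval ζ‖) (cobounded ℂ) (nhds ‖c‖) := h.norm
    have := hnorm.eventually_gt_atTop (‖c‖ + 1)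
    have h2 := hb.eventually (eventually_lt_nhds (by linarith : ‖c‖ < ‖c‖ + 1))
    obtain ⟨x, hx1, hx2⟩ := (this.and h2).exists
    linarith
  have : r.degree ≤ 0 := not_lt.mp hdeg
  have hr : r = C (r.coeff 0) := Polynomial.eq_C_of_degree_le_zero this
  have hc : r.coeff 0 = c := by
    have h' : Tendsto (fun _ : ℂ => r.coeff 0) (cobounded ℂ) (nhds c) := by
      refine h.congr fun ζ => ?_
      rw [hr]; simp
    exact tendsto_nhds_unique tendsto_const_nhds h'
  rw [hr, hc]

/-- An injective polynomial map `ψ : ℂ → ℂᵏ` whose projective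
closure meets the hyperplane at infinity transversally in a single point — i.e.
`ζ⁻¹ • ψ(ζ)` converges to a nonzero direction `ω` at infinity — has degree 1:
`ψ(ζ) = ζν₁ + ν₂` with `ν₁ ≠ 0`, and its image is a complex affine line. -/
theorem stmt_17 (k : ℕ) (ψ : ℂ → (Fin k → ℂ))
    (hinj : Function.Injective ψ)
    (hpoly : ∀ i, ∃ p : Polynomial ℂ, ∀ ζ, ψ ζ i = p.eval ζ)
    (ω : Fin k → ℂ) (hω : ω ≠ 0)
    (htrans : Filter.Tendsto (fun ζ : ℂ => ζ⁻¹ • ψ ζ)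
      (Bornology.cobounded ℂ) (nhds ω)) :
    ∃ ν₁ ν₂ : Fin k → ℂ, ν₁ ≠ 0 ∧ ∀ ζ : ℂ, ψ ζ = ζ • ν₁ + ν₂ := by
  refine ⟨ω, ψ 0, hω, fun ζ => ?_⟩
  funext i
  obtain ⟨p, hp⟩ := hpoly i
  have hcomp : Tendsto (fun ζ : ℂ => ζ⁻¹ * p.eval ζ) (cobounded ℂ) (nhds (ω i)) := by
    have := ((continuous_apply i).tendsto ω).comp htrans
    refine this.congr fun ζ => ?_
    simp [hp]
  set q : Polynomial ℂ := p - C (p.eval 0) with hq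
  have hq0 : q.coeff 0 = 0 := by
    simp [hq, Polynomial.coeff_sub, ← Polynomial.coeff_zero_eq_eval_zero]
  have hXq : X * q.divX = q := by
    have := q.X_mul_divX_add
    rw [hq0] at this; simpa using this
  have hne : ∀ᶠ ζ : ℂ in cobounded ℂ, ζ ≠ 0 := by
    filter_upwards [tendsto_norm_cobounded_atTop.eventually_gt_atTop 0] with ζ hζ
    simpa using (norm_pos_iff.mp hζ)
  have hdivX : Tendsto (fun ζ : ℂ => q.divX.eval ζ) (cobounded ℂ) (nhds (ω i)) := by
    have hinv : Tendsto (fun ζ : ℂ => ζ⁻¹ * p.eval 0) (cobounded ℂ) (nhds 0) := by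
      simpa using tendsto_inv₀_cobounded.mul_const (p.eval 0)
    have h3 := hcomp.sub hinv
    rw [sub_zero] at h3
    refine h3.congr' ?_
    filter_upwards [hne] with ζ hζ
    have hqe : q.eval ζ = ζ * q.divX.eval ζ := by
      conv_lhs => rw [← hXq]; simp
    have hqe' : p.eval ζ - p.eval 0 = ζ * q.divX.eval ζ := by
      rw [← hqe]; simp [hq]
    show _ - _ = _
    rw [← mul_sub, hqe', inv_mul_cancel_left₀ hζ]
  have hC : q.divX = C (ω i) := poly_tendsto_const _ _ hdivX
  have hfin : p.eval ζ = ζ * ω i + p.eval 0 := by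
    have h4 := hXq
    rw [hC] at h4
    have h2 : q.eval ζ = ζ * ω i := by rw [← h4, Polynomial.eval_mul, Polynomial.eval_X, Polynomial.eval_C]
    have h5 : p.eval ζ - p.eval 0 = ζ * ω i := by simpa [hq] using h2
    linear_combination h5
  simp [hp, Pi.add_apply, Pi.smul_apply, hfin, smul_eq_mul]
end

section
/- Let φ : ℂ^{k−1} × ℂ → ℂᵏ be holomorphic, α > 0 real, and suppose for a dense set Σ ⊆ ℂ^{k−1} of parameters u there exist α(u) ∈ ℝ₊, ν₁(u), ν₂(u) ∈ ℂᵏ with φ(u, z_k) = exp(2πi z_k/α(u))·ν₁(u) + ν₂(u) for all z_k ∈ ℂ. Assume further that ν₂(u) takes values in a fixed compact subset of ℂᵏ whenever defined, and that the assignment u ↦ (exp(1/α(u)), ν₁(u), ν₂(u)) extends holomorphically (determined by φ(u,0), φ(u,1), φ(u,−1)). Then α(u) ≡ α is constant, ν₁, ν₂ extend to holomorphic maps on ℂ^{k−1}, φ(u, z_k) = ν₁(u)exp(2πi z_k/α) + ν₂(u) for all u, and ν₂ is constant. -/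
/-!
Since `α(u) > 0`, the holomorphic extension `e` of `u ↦ exp(1/α(u))` has modulus at least `1` on the
dense set `Σ`, hence everywhere; so `1/e` is a bounded entire function and `e`, hence `α`, is
constant by Liouville. The extension of `ν₂` takes values in the compact set on `Σ`, hence everywhere,
so it is constant by Liouville as well, and the representation of `φ` extends from `Σ` to all `u` by
continuity.
-/

open Bornology Set

theorem Differentiable.apply_eq_apply_of_le_norm {E : Type*} [NormedAddCommGroup E]
    [NormedSpace ℂ E] {f : E → ℂ} (hf : Differentiable ℂ f) {r : ℝ} (hr : 0 < r)
    (h : ∀ x, r ≤ ‖f x‖) (x y : E) : f x = f y := by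
  have hne : ∀ x, f x ≠ 0 := fun x hx => by
    have := h x
    rw [hx, norm_zero] at this
    linarith
  have hb : IsBounded (range fun x => (f x)⁻¹) :=
    (Metric.isBounded_closedBall (x := (0 : ℂ)) (r := r⁻¹)).subset <| range_subset_iff.2 fun x => by
      simpa only [Metric.mem_closedBall, dist_zero_right, norm_inv] using
        inv_anti₀ hr (h x)
  exact inv_injective ((hf.inv hne).apply_eq_apply_of_bounded hb x y)

theorem Complex.exp_one_div_ofReal_injective :
    Function.Injective fun a : ℝ => Complex.exp (1 / (a : ℂ)) := by
  intro a b h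
  simp only [← Complex.ofReal_one, ← Complex.ofReal_div, ← Complex.ofReal_exp,
    Complex.ofReal_inj, Real.exp_eq_exp, one_div, inv_inj] at h
  exact h

theorem Complex.one_le_norm_exp_one_div_ofReal {a : ℝ} (ha : 0 ≤ a) :
    1 ≤ ‖Complex.exp (1 / (a : ℂ))‖ := by
  rw [Complex.norm_exp, ← Complex.ofReal_one, ← Complex.ofReal_div, Complex.ofReal_re]
  exact Real.one_le_exp (by positivity)

/-- Proposition 4.5: If a holomorphic map
`φ : ℂ^{k−1} × ℂ → ℂᵏ` has, for a dense set `Σ` of parameters `u`, the form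
`φ(u, z_k) = exp(2πi z_k/α(u))·ν₁(u) + ν₂(u)` with `α(u) > 0`, `ν₂(u)` in a fixed
compact set, and the data `u ↦ (exp(1/α(u)), ν₁(u), ν₂(u))` extends
holomorphically, then `α` is a constant `α`, `ν₁` extends holomorphically, the
formula holds for all `u`, and `ν₂` is constant. -/
theorem stmt_19 (m k : ℕ)
    (φ : (Fin m → ℂ) × ℂ → (Fin k → ℂ)) (hφ : Differentiable ℂ φ)
    (S : Set (Fin m → ℂ)) (hdense : Dense S)
    (Kc : Set (Fin k → ℂ)) (hKc : IsCompact Kc)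
    (α : (Fin m → ℂ) → ℝ) (ν₁ ν₂ : (Fin m → ℂ) → (Fin k → ℂ))
    (hrep : ∀ u ∈ S, 0 < α u ∧ ν₂ u ∈ Kc ∧ ∀ ζ : ℂ,
      φ (u, ζ) = Complex.exp (2 * (Real.pi : ℂ) * Complex.I * ζ / (α u : ℂ)) • ν₁ u + ν₂ u)
    (hext : ∃ (e : (Fin m → ℂ) → ℂ) (N₁ N₂ : (Fin m → ℂ) → (Fin k → ℂ)),
      Differentiable ℂ e ∧ Differentiable ℂ N₁ ∧ Differentiable ℂ N₂ ∧
      ∀ u ∈ S, e u = Complex.exp (1 / (α u : ℂ)) ∧ N₁ u = ν₁ u ∧ N₂ u = ν₂ u) :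
    ∃ αc : ℝ, 0 < αc ∧ (∀ u ∈ S, α u = αc) ∧
      ∃ (M₁ : (Fin m → ℂ) → (Fin k → ℂ)) (c₂ : Fin k → ℂ),
        Differentiable ℂ M₁ ∧ (∀ u ∈ S, M₁ u = ν₁ u) ∧ c₂ ∈ Kc ∧
        ∀ (u : Fin m → ℂ) (ζ : ℂ),
          φ (u, ζ) = Complex.exp (2 * (Real.pi : ℂ) * Complex.I * ζ / (αc : ℂ)) • M₁ u + c₂ := by
  obtain ⟨e, N₁, N₂, he, hN₁, hN₂, hagree⟩ := hext
  obtain ⟨u₀, hu₀⟩ := hdense.nonempty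
  have he_norm : ∀ x, 1 ≤ ‖e x‖ := fun x =>
    MapsTo.closure_left (s := S) (t := {z : ℂ | 1 ≤ ‖z‖})
      (fun u hu => (hagree u hu).1 ▸ Complex.one_le_norm_exp_one_div_ofReal (hrep u hu).1.le)
      he.continuous (isClosed_le continuous_const continuous_norm) (hdense x)
  have hα : ∀ u ∈ S, α u = α u₀ := fun u hu => Complex.exp_one_div_ofReal_injective <| by
    simp only [← (hagree u hu).1, ← (hagree u₀ hu₀).1]
    exact he.apply_eq_apply_of_le_norm one_pos he_norm u u₀
  have hN₂_mem : ∀ x, N₂ x ∈ Kc := fun x =>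
    MapsTo.closure_left (s := S) (fun u hu => (hagree u hu).2.2 ▸ (hrep u hu).2.1)
      hN₂.continuous hKc.isClosed (hdense x)
  have hN₂_const : ∀ x, N₂ x = N₂ u₀ := fun x =>
    hN₂.apply_eq_apply_of_bounded (hKc.isBounded.subset (range_subset_iff.2 hN₂_mem)) x u₀
  refine ⟨α u₀, (hrep u₀ hu₀).1, hα, N₁, N₂ u₀, hN₁, fun u hu => (hagree u hu).2.1,
    hN₂_mem u₀, fun u ζ => ?_⟩
  have hN₁c := hN₁.continuous
  refine congrFun (Continuous.ext_on hdense (f := fun u => φ (u, ζ))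
    (g := fun u => Complex.exp (2 * (Real.pi : ℂ) * Complex.I * ζ / (α u₀ : ℂ)) • N₁ u + N₂ u₀)
    (hφ.continuous.comp (by fun_prop)) (by fun_prop) fun v hv => ?_) u
  dsimp only
  rw [(hrep v hv).2.2 ζ, hα v hv, (hagree v hv).2.1, ← hN₂_const v, (hagree v hv).2.2]
end
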